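/- arXiv:2207.07959 — 5 statements merged into one kernel-verified Lean document; each statement's English description precedes it below -/
import Mathlib

section
/- Let a ∈ C([0,1]) be weakly degenerate with degeneracy point x₀ ∈ [0,1]. Then there exists a constant C > 0 such that for every u ∈ H²_a(0,1) one has ‖u'‖²_{L²(0,1)} ≤ C (‖u‖²_{L²(0,1)} + ‖√a·u''‖²_{L²(0,1)}). Consequently, the norms ‖u‖²_{H²_a(0,1)} = ‖u‖²_{L²(0,1)} + ‖u'‖²_{L²(0,1)} + ‖√a·u''‖²_{L²(0,1)} and ‖u‖²_{2,a} = ‖u‖²_{L²(0,1)} + ‖√a·u''‖²_{L²(0,1)} are equivalent on H²_a(0,1). -/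
open MeasureTheory Set Filter

/-- `f` is absolutely continuous on `[c,d]` with (a.e.) derivative `g`,
expressed via the fundamental theorem of calculus. -/
def ACOn (c d : ℝ) (f g : ℝ → ℝ) : Prop :=
  MeasureTheory.IntegrableOn g (Set.Icc c d) ∧
    ∀ x ∈ Set.Icc c d, f x = f c + ∫ t in c..x, g t

/-- `f` is locally absolutely continuous on `[0,1] \ {x₀}` with derivative `g`. -/
def LocACOn (x₀ : ℝ) (f g : ℝ → ℝ) : Prop :=
  ∀ c d : ℝ, 0 ≤ c → d ≤ 1 → c ≤ d → x₀ ∉ Set.Icc c d → ACOn c d f g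

/-- `a` is weakly degenerate with degeneracy point `x₀`. -/
def WeaklyDeg (a : ℝ → ℝ) (x₀ : ℝ) : Prop :=
  ContinuousOn a (Set.Icc 0 1) ∧ x₀ ∈ Set.Icc (0:ℝ) 1 ∧ a x₀ = 0 ∧
    (∀ x ∈ Set.Icc (0:ℝ) 1, x ≠ x₀ → 0 < a x) ∧
    MeasureTheory.IntegrableOn (fun x => 1 / a x) (Set.Ioo 0 1)

/-- `a` is strongly degenerate with degeneracy point `x₀`. -/
def StronglyDeg (a : ℝ → ℝ) (x₀ : ℝ) : Prop :=
  ContinuousOn a (Set.Icc 0 1) ∧ x₀ ∈ Set.Icc (0:ℝ) 1 ∧ a x₀ = 0 ∧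
    (∀ x ∈ Set.Icc (0:ℝ) 1, x ≠ x₀ → 0 < a x) ∧
    ¬ MeasureTheory.IntegrableOn (fun x => 1 / a x) (Set.Ioo 0 1)

/-- Hypothesis (H): there is `K ∈ [1,2)` such that `x ↦ |x-x₀|^K / a x` is
non-increasing on `[0,x₀)` and non-decreasing on `(x₀,1]`. -/
def HypH (a : ℝ → ℝ) (x₀ : ℝ) : Prop :=
  ∃ K : ℝ, 1 ≤ K ∧ K < 2 ∧
    AntitoneOn (fun x => |x - x₀| ^ K / a x) (Set.Ico 0 x₀) ∧
    MonotoneOn (fun x => |x - x₀| ^ K / a x) (Set.Ioc x₀ 1)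

/-- The squared `L²(0,1)` norm. -/
noncomputable def sqL2 (f : ℝ → ℝ) : ℝ := ∫ x in Set.Ioo (0:ℝ) 1, (f x) ^ 2


/-!
Since `1 / a ∈ L¹`, Cauchy–Schwarz with weight `a` gives
`‖u''‖²_{L¹} ≤ ‖1/a‖_{L¹} ‖√a u''‖²_{L²}`, so `u'` oscillates by at most `‖u''‖_{L¹}` on `[0,1]`.
Pick `c ∈ [0,1/4]` and `d ∈ [3/4,1]` with `u(c)², u(d)² ≤ 4 ‖u‖²_{L²}`; averaging `u'` over `[c,d]`,
where its mean is `(u(d) - u(c)) / (d - c)`, bounds `|u'|` pointwise by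
`2 |u(c)| + 2 |u(d)| + ‖u''‖_{L¹}`. Squaring and integrating gives the estimate.
-/

lemma two_mul_mul_abs_le_of_pos {w : ℝ} (hw : 0 < w) (s v : ℝ) :
    2 * s * |v| ≤ s ^ 2 * (1 / w) + w * v ^ 2 := by
  have h : 0 ≤ (s - w * |v|) ^ 2 / w := by positivity
  have e : (s - w * |v|) ^ 2 / w = s ^ 2 * (1 / w) + w * v ^ 2 - 2 * s * |v| := by
    field_simp
    rw [← sq_abs v]
    ring
  linarith

lemma sq_integral_abs_le_integral_inv_mul_integral {α : Type*} [MeasurableSpace α]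
    {μ : Measure α} {w v : α → ℝ} (hw : ∀ᵐ x ∂μ, 0 < w x)
    (hw_inv : Integrable (fun x => 1 / w x) μ) (hwv : Integrable (fun x => w x * v x ^ 2) μ)
    (hv : Integrable v μ) :
    (∫ x, |v x| ∂μ) ^ 2 ≤ (∫ x, 1 / w x ∂μ) * ∫ x, w x * v x ^ 2 ∂μ := by
  set J := ∫ x, |v x| ∂μ
  set A := ∫ x, 1 / w x ∂μ
  set B := ∫ x, w x * v x ^ 2 ∂μ
  have hquad : ∀ s : ℝ, 0 ≤ A * (s * s) + (-2 * J) * s + B := by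
    intro s
    have h : ∫ x, 2 * s * |v x| ∂μ ≤ ∫ x, (s ^ 2 * (1 / w x) + w x * v x ^ 2) ∂μ :=
      integral_mono_ae (hv.abs.const_mul _) ((hw_inv.const_mul _).add hwv)
        (by filter_upwards [hw] with x hx using two_mul_mul_abs_le_of_pos hx s (v x))
    rw [integral_const_mul, integral_add (hw_inv.const_mul _) hwv, integral_const_mul] at h
    linarith
  have := discrim_le_zero hquad
  rw [discrim] at this
  linarith

namespace ACOn

variable {c d : ℝ} {f g : ℝ → ℝ}

lemma intervalIntegrable (hf : ACOn c d f g) {x y : ℝ} (hx : x ∈ Icc c d) (hy : y ∈ Icc c d) :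
    IntervalIntegrable g volume x y :=
  (hf.1.mono_set (uIcc_subset_Icc hx hy)).intervalIntegrable

lemma sub_eq_integral (hf : ACOn c d f g) {x y : ℝ} (hx : x ∈ Icc c d) (hy : y ∈ Icc c d) :
    f x - f y = ∫ t in y..x, g t := by
  have hc : c ∈ Icc c d := left_mem_Icc.2 (hx.1.trans hx.2)
  rw [hf.2 x hx, hf.2 y hy, ← intervalIntegral.integral_interval_sub_left
    (hf.intervalIntegrable hc hx) (hf.intervalIntegrable hc hy)]
  ring

lemma continuousOn (hf : ACOn c d f g) : ContinuousOn f (Icc c d) := by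
  rcases lt_or_ge d c with hdc | hcd
  · simp [Icc_eq_empty_of_lt hdc]
  have hprim := intervalIntegral.continuousOn_primitive_interval (μ := volume)
    (a := c) (b := d) (f := g) (by rw [uIcc_of_le hcd]; exact hf.1)
  rw [uIcc_of_le hcd] at hprim
  exact (continuousOn_const.add hprim).congr hf.2

lemma abs_sub_le (hf : ACOn c d f g) {x y : ℝ} (hx : x ∈ Icc c d) (hy : y ∈ Icc c d) :
    |f x - f y| ≤ ∫ t in Icc c d, |g t| := by
  rw [hf.sub_eq_integral hx hy]
  calc |∫ t in y..x, g t| ≤ ∫ t in uIoc y x, |g t| := by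
        simpa only [Real.norm_eq_abs] using
          intervalIntegral.norm_integral_le_integral_norm_uIoc (f := g) (μ := volume)
    _ ≤ ∫ t in Icc c d, |g t| :=
        setIntegral_mono_set hf.1.abs (Eventually.of_forall fun _ => abs_nonneg _)
          (uIoc_subset_uIcc.trans (uIcc_subset_Icc hy hx)).eventuallyLE

lemma mul_abs_le (hf : ACOn c d f g) {p q x K : ℝ} (hp : p ∈ Icc c d) (hq : q ∈ Icc c d)
    (hpq : p ≤ q) (hosc : ∀ y ∈ Icc p q, |g x - g y| ≤ K) :
    (q - p) * |g x| ≤ |f q - f p| + (q - p) * K := by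
  have hmean : (q - p) * g x - (f q - f p) = ∫ y in p..q, (g x - g y) := by
    rw [hf.sub_eq_integral hq hp, intervalIntegral.integral_sub intervalIntegrable_const
      (hf.intervalIntegrable hp hq), intervalIntegral.integral_const, smul_eq_mul]
  have hdev : ‖∫ y in p..q, (g x - g y)‖ ≤ K * |q - p| :=
    intervalIntegral.norm_integral_le_of_norm_le_const fun y hy =>
      hosc y (Ioc_subset_Icc_self (by rwa [uIoc_of_le hpq] at hy))
  rw [Real.norm_eq_abs, ← hmean, abs_of_nonneg (sub_nonneg.2 hpq)] at hdev
  have := abs_sub_abs_le_abs_sub ((q - p) * g x) (f q - f p)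
  rw [abs_mul, abs_of_nonneg (sub_nonneg.2 hpq)] at this
  linarith

end ACOn

lemma exists_mul_le_setIntegral_Icc {g : ℝ → ℝ} {p q : ℝ} (hpq : p ≤ q)
    (hg : ContinuousOn g (Icc p q)) : ∃ c ∈ Icc p q, (q - p) * g c ≤ ∫ x in Icc p q, g x := by
  obtain ⟨c, hc, hmin⟩ := isCompact_Icc.exists_isMinOn (nonempty_Icc.2 hpq) hg
  refine ⟨c, hc, ?_⟩
  calc (q - p) * g c = ∫ _ in Icc p q, g c := by simp [hpq]
    _ ≤ ∫ x in Icc p q, g x :=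
        setIntegral_mono_on (integrableOn_const measure_Icc_lt_top.ne) hg.integrableOn_Icc
          measurableSet_Icc hmin

lemma exists_mul_sq_le_sqL2 {u : ℝ → ℝ} (hu : ContinuousOn u (Icc 0 1)) {p q : ℝ} (hp : 0 ≤ p)
    (hpq : p ≤ q) (hq : q ≤ 1) : ∃ c ∈ Icc p q, (q - p) * u c ^ 2 ≤ sqL2 u := by
  have hsub : Icc p q ⊆ Icc 0 1 := Icc_subset_Icc hp hq
  obtain ⟨c, hc, hle⟩ := exists_mul_le_setIntegral_Icc hpq ((hu.mono hsub).pow 2)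
  refine ⟨c, hc, hle.trans ?_⟩
  rw [sqL2, ← integral_Icc_eq_integral_Ioo]
  exact setIntegral_mono_set (hu.pow 2).integrableOn_Icc
    (Eventually.of_forall fun _ => sq_nonneg _) hsub.eventuallyLE

lemma sqL2_le_of_forall_sq_le {f : ℝ → ℝ} {M : ℝ} (h : ∀ x ∈ Ioo 0 1, f x ^ 2 ≤ M) :
    sqL2 f ≤ M := by
  have := norm_setIntegral_le_of_norm_le_const (μ := volume) (f := fun x => f x ^ 2)
    measure_Ioo_lt_top fun x hx => by simpa [abs_of_nonneg (sq_nonneg (f x))] using h x hx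
  simp only [Real.volume_real_Ioo_of_le zero_le_one, sub_zero, mul_one] at this
  exact (le_abs_self _).trans this

lemma sq_deriv_le_sqL2_add_sq_integral_abs {u u' u'' : ℝ → ℝ} (hu : ACOn 0 1 u u')
    (hu' : ACOn 0 1 u' u'') {x : ℝ} (hx : x ∈ Icc 0 1) :
    u' x ^ 2 ≤ 96 * sqL2 u + 3 * (∫ t in Ioo 0 1, |u'' t|) ^ 2 := by
  set J := ∫ t in Ioo 0 1, |u'' t|
  have hJ : 0 ≤ J := setIntegral_nonneg measurableSet_Ioo fun _ _ => abs_nonneg _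
  obtain ⟨c, hc, hc_sq⟩ := exists_mul_sq_le_sqL2 hu.continuousOn le_rfl
    (by norm_num : (0 : ℝ) ≤ 1 / 4) (by norm_num)
  obtain ⟨d, hd, hd_sq⟩ := exists_mul_sq_le_sqL2 hu.continuousOn
    (by norm_num : (0 : ℝ) ≤ 3 / 4) (by norm_num) le_rfl
  have hc01 : c ∈ Icc (0 : ℝ) 1 := ⟨hc.1, by linarith [hc.2]⟩
  have hd01 : d ∈ Icc (0 : ℝ) 1 := ⟨by linarith [hd.1], hd.2⟩
  have hosc : ∀ y ∈ Icc c d, |u' x - u' y| ≤ J := fun y hy =>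
    (hu'.abs_sub_le hx ⟨hc.1.trans hy.1, hy.2.trans hd.2⟩).trans_eq integral_Icc_eq_integral_Ioo
  have hmean := hu.mul_abs_le hc01 hd01 (by linarith [hc.2, hd.1]) hosc
  have hud : |u d - u c| ≤ |u d| + |u c| := abs_sub _ _
  have hpt : |u' x| ≤ 2 * |u d| + 2 * |u c| + J := by
    by_contra! h
    have hdc : 0 < d - c := by linarith [hc.2, hd.1]
    nlinarith [mul_lt_mul_of_pos_left h hdc, abs_nonneg (u d), abs_nonneg (u c), hc.2, hd.1]
  have hsq : u' x ^ 2 ≤ (2 * |u d| + 2 * |u c| + J) ^ 2 := by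
    rw [← sq_abs]; exact pow_le_pow_left₀ (abs_nonneg _) hpt 2
  nlinarith [sq_abs (u c), sq_abs (u d), sq_nonneg (|u d| - |u c|),
    sq_nonneg (2 * |u d| - J), sq_nonneg (2 * |u c| - J), hc.2, hd.1]

lemma WeaklyDeg.ae_pos {a : ℝ → ℝ} {x₀ : ℝ} (ha : WeaklyDeg a x₀) :
    ∀ᵐ x ∂(volume.restrict (Ioo (0 : ℝ) 1)), 0 < a x := by
  filter_upwards [ae_restrict_of_ae (Measure.ae_ne volume x₀),
    ae_restrict_mem measurableSet_Ioo] with x hx hx01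
  exact ha.2.2.2.1 x (Ioo_subset_Icc_self hx01) hx

/-- for a weakly degenerate `a`, on `H²_a(0,1)` we have
`‖u'‖² ≤ C(‖u‖² + ‖√a u''‖²)`, hence the norms `‖·‖_{H²_a}` and `‖·‖_{2,a}` are equivalent. -/
theorem statement0 (a : ℝ → ℝ) (x₀ : ℝ) (ha : WeaklyDeg a x₀) :
    ∃ C > 0, ∀ u u' u'' : ℝ → ℝ,
      -- u ∈ H¹(0,1) with u' absolutely continuous on [0,1] (so u ∈ H²_a(0,1))
      ACOn 0 1 u u' →
      MeasureTheory.IntegrableOn (fun x => (u' x) ^ 2) (Set.Ioo 0 1) →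
      ACOn 0 1 u' u'' →
      -- √a·u'' ∈ L²(0,1)
      MeasureTheory.IntegrableOn (fun x => a x * (u'' x) ^ 2) (Set.Ioo 0 1) →
      -- the main estimate
      (sqL2 u' ≤ C * (sqL2 u + ∫ x in Set.Ioo (0:ℝ) 1, a x * (u'' x) ^ 2)) ∧
      -- consequently the two (squared) norms are equivalent
      (sqL2 u + ∫ x in Set.Ioo (0:ℝ) 1, a x * (u'' x) ^ 2 ≤
        sqL2 u + sqL2 u' + ∫ x in Set.Ioo (0:ℝ) 1, a x * (u'' x) ^ 2) ∧
      (sqL2 u + sqL2 u' + ∫ x in Set.Ioo (0:ℝ) 1, a x * (u'' x) ^ 2 ≤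
        (1 + C) * (sqL2 u + ∫ x in Set.Ioo (0:ℝ) 1, a x * (u'' x) ^ 2)) := by
  have ha_pos := ha.ae_pos
  set A := ∫ x in Ioo (0 : ℝ) 1, 1 / a x
  have hA : 0 ≤ A := integral_nonneg_of_ae (by filter_upwards [ha_pos] with x hx; positivity)
  refine ⟨96 + 3 * A, by positivity, fun u u' u'' hu _ hu' hB => ?_⟩
  set B := ∫ x in Ioo (0 : ℝ) 1, a x * u'' x ^ 2
  have hI : 0 ≤ sqL2 u := setIntegral_nonneg measurableSet_Ioo fun _ _ => sq_nonneg _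
  have hu'0 : 0 ≤ sqL2 u' := setIntegral_nonneg measurableSet_Ioo fun _ _ => sq_nonneg _
  have hB0 : 0 ≤ B := integral_nonneg_of_ae (by filter_upwards [ha_pos] with x hx; positivity)
  have hJ := sq_integral_abs_le_integral_inv_mul_integral ha_pos ha.2.2.2.2 hB
    (hu'.1.mono_set Ioo_subset_Icc_self)
  have hu'_sq : sqL2 u' ≤ 96 * sqL2 u + 3 * (A * B) := sqL2_le_of_forall_sq_le fun x hx =>
    (sq_deriv_le_sqL2_add_sq_integral_abs hu hu' (Ioo_subset_Icc_self hx)).trans (by linarith)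
  refine ⟨by nlinarith, by linarith, by nlinarith⟩
end

section
/- Let u ∈ C([0,1]) and let p₁ be a polynomial of degree at most one satisfying ‖u − p₁‖_{L²(0,1)} = min over all polynomials p of degree at most one of ‖u − p‖_{L²(0,1)}. Then the function v := u − p₁ has at least two distinct zeros in [0,1]. -/
open MeasureTheory Set

private lemma myIntOn {f : ℝ → ℝ} (hf : ContinuousOn f (Icc 0 1)) :
    IntegrableOn f (Ioo 0 1) :=
  (hf.integrableOn_Icc).mono_set Ioo_subset_Icc_self

/-- positivity of integral of a continuous function nonneg on Ioo and positive off one point -/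
private lemma myIntPos (f : ℝ → ℝ) (hf : ContinuousOn f (Icc 0 1)) (c : ℝ)
    (hnn : ∀ x ∈ Ioo (0:ℝ) 1, 0 ≤ f x)
    (hpos : ∀ x ∈ Ioo (0:ℝ) 1, x ≠ c → 0 < f x) :
    0 < ∫ x in Ioo (0:ℝ) 1, f x := by
  rw [setIntegral_pos_iff_support_of_nonneg_ae
    ((ae_restrict_iff' measurableSet_Ioo).2 (ae_of_all _ hnn)) (myIntOn hf)]
  have hsub : Ioo (0:ℝ) 1 \ {c} ⊆ Function.support f ∩ Ioo 0 1 := by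
    rintro x ⟨hx, hxc⟩
    exact ⟨(hpos x hx (by simpa using hxc)).ne', hx⟩
  calc (0:ENNReal) < volume (Ioo (0:ℝ) 1 \ {c}) := by
        rw [measure_diff_null (measure_singleton c)]
        simp [Real.volume_Ioo]
    _ ≤ _ := measure_mono hsub

private lemma myIVT (f : ℝ → ℝ) (hf : ContinuousOn f (Icc 0 1)) {a b : ℝ}
    (ha : a ∈ Icc (0:ℝ) 1) (hb : b ∈ Icc (0:ℝ) 1)
    (hfa : f a < 0) (hfb : 0 < f b) : ∃ z ∈ uIcc a b, f z = 0 := by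
  have hsub : uIcc a b ⊆ Icc (0:ℝ) 1 := uIcc_subset_Icc ha hb
  have h0 : (0:ℝ) ∈ uIcc (f a) (f b) := by
    rw [Set.mem_uIcc]; left; exact ⟨hfa.le, hfb.le⟩
  obtain ⟨z, hz, hz0⟩ := intermediate_value_uIcc (hf.mono hsub) h0
  exact ⟨z, hz, hz0⟩

/-- orthogonality from minimality -/
private lemma myOrth (v p : ℝ → ℝ) (hv : ContinuousOn v (Icc 0 1)) (hp : Continuous p)
    (h : ∀ t : ℝ, ∫ x in Ioo (0:ℝ) 1, (v x) ^ 2 ≤ ∫ x in Ioo (0:ℝ) 1, (v x - t * p x) ^ 2) :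
    ∫ x in Ioo (0:ℝ) 1, p x * v x = 0 := by
  set C := ∫ x in Ioo (0:ℝ) 1, (p x) ^ 2 with hCdef
  set D := ∫ x in Ioo (0:ℝ) 1, p x * v x with hDdef
  have hIv2 : IntegrableOn (fun x => (v x) ^ 2) (Ioo 0 1) := myIntOn (hv.pow 2)
  have hIpv : IntegrableOn (fun x => p x * v x) (Ioo 0 1) :=
    myIntOn (hp.continuousOn.mul hv)
  have hIp2 : IntegrableOn (fun x => (p x) ^ 2) (Ioo 0 1) :=
    myIntOn ((hp.pow 2).continuousOn)
  have expand : ∀ t : ℝ, ∫ x in Ioo (0:ℝ) 1, (v x - t * p x) ^ 2 =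
      (∫ x in Ioo (0:ℝ) 1, (v x) ^ 2) - 2 * t * D + t ^ 2 * C := by
    intro t
    have e1 : ∀ x : ℝ, (v x - t * p x) ^ 2 =
        ((v x) ^ 2 - (2 * t) * (p x * v x)) + t ^ 2 * (p x) ^ 2 := by
      intro x; ring
    calc ∫ x in Ioo (0:ℝ) 1, (v x - t * p x) ^ 2
        = ∫ x in Ioo (0:ℝ) 1, (((v x) ^ 2 - (2 * t) * (p x * v x)) + t ^ 2 * (p x) ^ 2) :=
          integral_congr_ae (ae_of_all _ fun x => e1 x)
      _ = (∫ x in Ioo (0:ℝ) 1, ((v x) ^ 2 - (2 * t) * (p x * v x)))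
            + ∫ x in Ioo (0:ℝ) 1, t ^ 2 * (p x) ^ 2 :=
          integral_add (hIv2.sub (hIpv.const_mul _)) (hIp2.const_mul _)
      _ = ((∫ x in Ioo (0:ℝ) 1, (v x) ^ 2) - ∫ x in Ioo (0:ℝ) 1, (2 * t) * (p x * v x))
            + ∫ x in Ioo (0:ℝ) 1, t ^ 2 * (p x) ^ 2 := by
          rw [integral_sub hIv2 (hIpv.const_mul _)]
      _ = (∫ x in Ioo (0:ℝ) 1, (v x) ^ 2) - 2 * t * D + t ^ 2 * C := by
          rw [integral_const_mul, integral_const_mul]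
  have key : ∀ t : ℝ, 0 ≤ t ^ 2 * C - 2 * t * D := by
    intro t
    have := h t
    rw [expand t] at this
    linarith
  have hC : 0 ≤ C := setIntegral_nonneg measurableSet_Ioo (fun x _ => sq_nonneg _)
  by_contra hD
  have hD2 : 0 < D ^ 2 := by positivity
  rcases hC.eq_or_lt with hC0 | hC0
  · have := key D
    nlinarith
  · have h1 := key (D / C)
    have h2 : (D / C) ^ 2 * C - 2 * (D / C) * D = -(D ^ 2) / C := by
      field_simp; ring
    rw [h2] at h1
    have : -(D ^ 2) / C < 0 := div_neg_of_neg_of_pos (by nlinarith) hC0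
    linarith

private lemma myCore (v : ℝ → ℝ) (hv : ContinuousOn v (Icc 0 1))
    (h0 : ∫ x in Ioo (0:ℝ) 1, v x = 0)
    (h1 : ∫ x in Ioo (0:ℝ) 1, x * v x = 0) :
    ∃ x₁ ∈ Icc (0:ℝ) 1, ∃ x₂ ∈ Icc (0:ℝ) 1, x₁ ≠ x₂ ∧ v x₁ = 0 ∧ v x₂ = 0 := by
  by_contra hcon
  push_neg at hcon
  -- hcon : ∀ x₁ ∈ Icc 0 1, ∀ x₂ ∈ Icc 0 1, x₁ ≠ x₂ → v x₁ = 0 → v x₂ ≠ 0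
  -- Step 1: v has a zero.
  have hzero : ∃ c ∈ Icc (0:ℝ) 1, v c = 0 := by
    by_contra hz
    push_neg at hz
    have h01 : (0:ℝ) ∈ Icc (0:ℝ) 1 := by norm_num
    rcases (hz 0 h01).lt_or_gt with hneg | hpos
    · -- v < 0 everywhere on Icc
      have hall : ∀ x ∈ Icc (0:ℝ) 1, v x < 0 := by
        intro x hx
        rcases (hz x hx).lt_or_gt with h | h
        · exact h
        · obtain ⟨z, hz1, hz2⟩ := myIVT v hv h01 hx hneg h
          exact absurd hz2 (hz z (uIcc_subset_Icc h01 hx hz1))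
      have := myIntPos (fun x => -v x) (hv.neg) 2
        (fun x hx => by
          have := hall x (Ioo_subset_Icc_self hx); show (0:ℝ) ≤ -v x; linarith)
        (fun x hx _ => by
          have := hall x (Ioo_subset_Icc_self hx); show (0:ℝ) < -v x; linarith)
      rw [integral_neg, h0] at this
      linarith
    · have hall : ∀ x ∈ Icc (0:ℝ) 1, 0 < v x := by
        intro x hx
        rcases (hz x hx).lt_or_gt with h | h
        · obtain ⟨z, hz1, hz2⟩ := myIVT v hv hx h01 h hpos
          exact absurd hz2 (hz z (uIcc_subset_Icc hx h01 hz1))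
        · exact h
      have := myIntPos v hv 2
        (fun x hx => (hall x (Ioo_subset_Icc_self hx)).le)
        (fun x hx _ => hall x (Ioo_subset_Icc_self hx))
      rw [h0] at this
      linarith
  obtain ⟨c, hc, hvc⟩ := hzero
  have huniq : ∀ x ∈ Icc (0:ℝ) 1, v x = 0 → x = c := by
    intro x hx hvx
    by_contra hne
    exact hcon x hx c hc hne hvx hvc
  have hne0 : ∀ x ∈ Icc (0:ℝ) 1, x ≠ c → v x ≠ 0 := by
    intro x hx hxc hvx
    exact hxc (huniq x hx hvx)
  -- Same side ⇒ same sign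
  have hsign : ∀ x ∈ Icc (0:ℝ) 1, ∀ y ∈ Icc (0:ℝ) 1,
      0 < (x - c) * (y - c) → 0 < v x * v y := by
    intro x hx y hy hside
    have hxc : x ≠ c := by rintro rfl; simp at hside
    have hyc : y ≠ c := by rintro rfl; simp at hside
    have hvx := hne0 x hx hxc
    have hvy := hne0 y hy hyc
    rcases lt_trichotomy (v x * v y) 0 with h | h | h
    · -- opposite signs ⇒ zero strictly between, but it must be c, contradiction
      exfalso
      have : ∃ z ∈ uIcc x y, v z = 0 := by
        rcases hvx.lt_or_gt with hx1 | hx1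
        · have hy1 : 0 < v y := by nlinarith
          exact myIVT v hv hx hy hx1 hy1
        · have hy1 : v y < 0 := by nlinarith
          obtain ⟨z, hz1, hz2⟩ := myIVT v hv hy hx hy1 hx1
          exact ⟨z, by rwa [uIcc_comm], hz2⟩
      obtain ⟨z, hz1, hz2⟩ := this
      have hzc : z = c := huniq z (uIcc_subset_Icc hx hy hz1) hz2
      subst hzc
      rcases le_total x y with hxy | hxy
      · rw [uIcc_of_le hxy] at hz1; obtain ⟨hh1, hh2⟩ := hz1; nlinarith
      · rw [uIcc_of_ge hxy] at hz1; obtain ⟨hh1, hh2⟩ := hz1; nlinarith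
    · exact absurd (mul_eq_zero.1 h) (by push_neg; exact ⟨hvx, hvy⟩)
    · exact h
  -- v takes a negative value
  have hnegex : ∃ a ∈ Icc (0:ℝ) 1, v a < 0 := by
    by_contra hno
    push_neg at hno
    have := myIntPos v hv c
      (fun x hx => hno x (Ioo_subset_Icc_self hx))
      (fun x hx hxc =>
        lt_of_le_of_ne (hno x (Ioo_subset_Icc_self hx))
          (Ne.symm (hne0 x (Ioo_subset_Icc_self hx) hxc)))
    rw [h0] at this; linarith
  have hposex : ∃ b ∈ Icc (0:ℝ) 1, 0 < v b := by
    by_contra hno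
    push_neg at hno
    have := myIntPos (fun x => -v x) hv.neg c
      (fun x hx => by
        have := hno x (Ioo_subset_Icc_self hx); show (0:ℝ) ≤ -v x; linarith)
      (fun x hx hxc => by
        have h1 := hno x (Ioo_subset_Icc_self hx)
        have h2 := hne0 x (Ioo_subset_Icc_self hx) hxc
        show (0:ℝ) < -v x
        rcases h1.lt_or_eq with h | h
        · linarith
        · exact absurd h h2)
    rw [integral_neg, h0] at this; linarith
  obtain ⟨a, ha, hva⟩ := hnegex
  obtain ⟨b, hb, hvb⟩ := hposex
  have hac : a ≠ c := fun h => by subst h; rw [hvc] at hva; exact lt_irrefl 0 hva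
  have hbc : b ≠ c := fun h => by subst h; rw [hvc] at hvb; exact lt_irrefl 0 hvb
  -- a and b are on opposite sides of c
  have hopp : (a - c) * (b - c) < 0 := by
    rcases lt_trichotomy ((a - c) * (b - c)) 0 with h | h | h
    · exact h
    · exfalso
      rcases mul_eq_zero.1 h with h | h
      · exact hac (by linarith [sub_eq_zero.1 h])
      · exact hbc (by linarith [sub_eq_zero.1 h])
    · exfalso
      have := hsign a ha b hb h
      nlinarith
  -- The unified contradiction
  have main : ∀ s : ℝ, (∀ x ∈ Icc (0:ℝ) 1, x ≠ c → 0 < s * ((x - c) * v x)) → False := by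
    intro s hgpos
    have hcont : ContinuousOn (fun x => s * ((x - c) * v x)) (Icc 0 1) :=
      continuousOn_const.mul (((continuousOn_id.sub continuousOn_const)).mul hv)
    have hnn : ∀ x ∈ Ioo (0:ℝ) 1, 0 ≤ s * ((x - c) * v x) := by
      intro x hx
      rcases eq_or_ne x c with rfl | h
      · simp [hvc]
      · exact (hgpos x (Ioo_subset_Icc_self hx) h).le
    have hpos := myIntPos _ hcont c hnn
      (fun x hx hxc => hgpos x (Ioo_subset_Icc_self hx) hxc)
    have hIv : IntegrableOn v (Ioo 0 1) := myIntOn hv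
    have hIxv : IntegrableOn (fun x => x * v x) (Ioo 0 1) :=
      myIntOn ((continuousOn_id).mul hv)
    have hcalc : ∫ x in Ioo (0:ℝ) 1, s * ((x - c) * v x) =
        s * ((∫ x in Ioo (0:ℝ) 1, x * v x) - c * ∫ x in Ioo (0:ℝ) 1, v x) := by
      rw [integral_const_mul]
      congr 1
      have e : ∀ x : ℝ, (x - c) * v x = x * v x - c * v x := fun x => by ring
      calc ∫ x in Ioo (0:ℝ) 1, (x - c) * v x
          = ∫ x in Ioo (0:ℝ) 1, (x * v x - c * v x) :=
            integral_congr_ae (ae_of_all _ fun x => e x)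
        _ = (∫ x in Ioo (0:ℝ) 1, x * v x) - ∫ x in Ioo (0:ℝ) 1, c * v x :=
            integral_sub hIxv (hIv.const_mul _)
        _ = (∫ x in Ioo (0:ℝ) 1, x * v x) - c * ∫ x in Ioo (0:ℝ) 1, v x := by
            rw [integral_const_mul]
    rw [hcalc, h0, h1] at hpos
    simp at hpos
  rcases hac.lt_or_gt with hlt | hgt
  · -- a < c, so b > c; sign pattern gives (x-c)*v x > 0
    have hbgt : c < b := by nlinarith
    apply main 1
    intro x hx hxc
    rcases hxc.lt_or_gt with hxlt | hxgt
    · have hside : 0 < (x - c) * (a - c) := by nlinarith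
      have := hsign x hx a ha hside
      have hvx : v x < 0 := by nlinarith
      nlinarith
    · have hside : 0 < (x - c) * (b - c) := by nlinarith
      have := hsign x hx b hb hside
      have hvx : 0 < v x := by nlinarith
      nlinarith
  · -- a > c, so b < c
    have hblt : b < c := by nlinarith
    apply main (-1)
    intro x hx hxc
    rcases hxc.lt_or_gt with hxlt | hxgt
    · have hside : 0 < (x - c) * (b - c) := by nlinarith
      have := hsign x hx b hb hside
      have hvx : 0 < v x := by nlinarith
      nlinarith
    · have hside : 0 < (x - c) * (a - c) := by nlinarith
      have := hsign x hx a ha hside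
      have hvx : v x < 0 := by nlinarith
      nlinarith

/-- if `p₁(x) = m x + q` is a best `L²(0,1)` approximation of a continuous
function `u` among polynomials of degree at most one, then `v := u - p₁` has at least two
distinct zeros in `[0,1]`. -/
theorem statement3 (u : ℝ → ℝ) (hu : ContinuousOn u (Set.Icc 0 1)) (m q : ℝ)
    (hmin : ∀ m' q' : ℝ,
      ∫ x in Set.Ioo (0:ℝ) 1, (u x - (m * x + q)) ^ 2 ≤
        ∫ x in Set.Ioo (0:ℝ) 1, (u x - (m' * x + q')) ^ 2) :
    ∃ x₁ ∈ Set.Icc (0:ℝ) 1, ∃ x₂ ∈ Set.Icc (0:ℝ) 1,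
      x₁ ≠ x₂ ∧ u x₁ - (m * x₁ + q) = 0 ∧ u x₂ - (m * x₂ + q) = 0 := by
  set v : ℝ → ℝ := fun x => u x - (m * x + q) with hvdef
  have hv : ContinuousOn v (Icc 0 1) :=
    hu.sub (((continuous_const.mul continuous_id).add continuous_const).continuousOn)
  have h1 : ∫ x in Ioo (0:ℝ) 1, x * v x = 0 := by
    apply myOrth v (fun x => x) hv continuous_id
    intro t
    calc ∫ x in Ioo (0:ℝ) 1, (v x) ^ 2
        ≤ ∫ x in Ioo (0:ℝ) 1, (u x - ((m + t) * x + q)) ^ 2 := hmin (m + t) q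
      _ = ∫ x in Ioo (0:ℝ) 1, (v x - t * x) ^ 2 :=
          integral_congr_ae (ae_of_all _ fun x => by simp only [hvdef]; ring)
  have h0 : ∫ x in Ioo (0:ℝ) 1, v x = 0 := by
    have := myOrth v (fun _ => (1:ℝ)) hv continuous_const (by
      intro t
      calc ∫ x in Ioo (0:ℝ) 1, (v x) ^ 2
          ≤ ∫ x in Ioo (0:ℝ) 1, (u x - (m * x + (q + t))) ^ 2 := hmin m (q + t)
        _ = ∫ x in Ioo (0:ℝ) 1, (v x - t * 1) ^ 2 :=
            integral_congr_ae (ae_of_all _ fun x => by simp only [hvdef]; ring))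
    simpa using this
  exact myCore v hv h0 h1
end

section
/- Let a ∈ C([0,1]) be nonnegative. Let u ∈ H¹(0,1) be such that u' is absolutely continuous on [0,1], √a·u'' ∈ L²(0,1) and a·u'' ∈ H²(0,1), and let v ∈ H¹(0,1) be such that v' is absolutely continuous on [0,1] and √a·v'' ∈ L²(0,1). Then ∫₀¹ (a u'')'' v dx = (a u'')'(1) v(1) − (a u'')'(0) v(0) − (a u'')(1) v'(1) + (a u'')(0) v'(0) + ∫₀¹ a u'' v'' dx. -/
open MeasureTheory Set Filter

/-! Two integrations by parts: `∫ w₂ v = [w₁ v] - ∫ w₁ v'` and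
`∫ w₁ v' = [(a u'') v'] - ∫ (a u'') v''`. A function given as the primitive of an integrable
function is absolutely continuous, and by Lebesgue differentiation its derivative agrees a.e. with
the integrand, so integration by parts for absolutely continuous functions applies. -/

theorem AbsolutelyContinuousOnInterval.congr {X : Type*} [PseudoMetricSpace X] {f g : ℝ → X}
    {a b : ℝ} (hf : AbsolutelyContinuousOnInterval f a b) (hfg : EqOn f g (uIcc a b)) :
    AbsolutelyContinuousOnInterval g a b := by
  refine hf.congr' (eventually_inf_principal.2 (Eventually.of_forall fun E hE =>
    Finset.sum_congr rfl fun i hi => ?_))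
  rw [hfg (hE.1 i hi).1, hfg (hE.1 i hi).2]

theorem absolutelyContinuousOnInterval_const {X : Type*} [PseudoMetricSpace X] (x : X)
    (a b : ℝ) : AbsolutelyContinuousOnInterval (fun _ : ℝ => x) a b := by
  simp [AbsolutelyContinuousOnInterval, tendsto_const_nhds]

namespace ACOn

variable {c d : ℝ} {f f' g g' : ℝ → ℝ}

theorem intervalIntegrable_s7 (hf : ACOn c d f f') (hcd : c ≤ d) :
    IntervalIntegrable f' volume c d :=
  (intervalIntegrable_iff_integrableOn_Icc_of_le hcd).2 hf.1

theorem absolutelyContinuousOnInterval (hf : ACOn c d f f') (hcd : c ≤ d) :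
    AbsolutelyContinuousOnInterval f c d :=
  ((absolutelyContinuousOnInterval_const (f c) c d).add
    ((hf.intervalIntegrable_s7 hcd).absolutelyContinuousOnInterval_intervalIntegral
      left_mem_uIcc)).congr fun x hx => (hf.2 x (uIcc_of_le hcd ▸ hx)).symm

theorem ae_deriv_eq (hf : ACOn c d f f') (hcd : c ≤ d) :
    ∀ᵐ x, x ∈ Ioo c d → deriv f x = f' x := by
  filter_upwards [(hf.intervalIntegrable_s7 hcd).ae_hasDerivAt_integral] with x hx hxI
  have hprim := (hx (uIcc_of_le hcd ▸ Ioo_subset_Icc_self hxI) c left_mem_uIcc).const_add (f c)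
  refine (hprim.congr_of_eventuallyEq ?_).deriv
  filter_upwards [Icc_mem_nhds hxI.1 hxI.2] with y hy using hf.2 y hy

theorem integral_deriv_mul_eq_sub (hf : ACOn c d f f') (hg : ACOn c d g g') (hcd : c ≤ d) :
    ∫ x in c..d, f' x * g x = f d * g d - f c * g c - ∫ x in c..d, f x * g' x := by
  have hibp := (hf.absolutelyContinuousOnInterval hcd).integral_mul_deriv_eq_deriv_mul
    (hg.absolutelyContinuousOnInterval hcd)
  have hIoo : ∀ᵐ x, x ∈ uIoc c d → x ∈ Ioo c d := by
    filter_upwards [(Ioo_ae_eq_Ioc (μ := volume) (a := c) (b := d)).mem_iff] with x hx hxI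
      using hx.2 (uIoc_of_le hcd ▸ hxI)
  have hderiv_g : ∫ x in c..d, f x * deriv g x = ∫ x in c..d, f x * g' x :=
    intervalIntegral.integral_congr_ae <| by
      filter_upwards [hg.ae_deriv_eq hcd, hIoo] with x hx hxIoo hxI using by rw [hx (hxIoo hxI)]
  have hderiv_f : ∫ x in c..d, deriv f x * g x = ∫ x in c..d, f' x * g x :=
    intervalIntegral.integral_congr_ae <| by
      filter_upwards [hf.ae_deriv_eq hcd, hIoo] with x hx hxIoo hxI using by rw [hx (hxIoo hxI)]
  linarith

end ACOn

theorem statement7_general (a : ℝ → ℝ)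
    (u'' w₁ w₂ v v' v'' : ℝ → ℝ)
    -- u ∈ H¹, u' absolutely continuous on [0,1], √a u'' ∈ L², a u'' ∈ H²
    (hau'' : ACOn 0 1 (fun x => a x * u'' x) w₁) (hw₁ : ACOn 0 1 w₁ w₂)
    -- v ∈ H¹, v' absolutely continuous on [0,1], √a v'' ∈ L²
    (hv : ACOn 0 1 v v') (hv'' : ACOn 0 1 v' v'') :
    ∫ x in Set.Ioo (0:ℝ) 1, w₂ x * v x =
      w₁ 1 * v 1 - w₁ 0 * v 0 - a 1 * u'' 1 * v' 1 + a 0 * u'' 0 * v' 0 +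
        ∫ x in Set.Ioo (0:ℝ) 1, a x * u'' x * v'' x := by
  have hw₂v := hw₁.integral_deriv_mul_eq_sub hv zero_le_one
  have hw₁v' := hau''.integral_deriv_mul_eq_sub hv'' zero_le_one
  simp only [intervalIntegral.integral_of_le zero_le_one, integral_Ioc_eq_integral_Ioo]
    at hw₂v hw₁v'
  rw [hw₂v, hw₁v']
  ring

/-- Green's formula for the operator in divergence form:
`∫ (a u'')'' v = (a u'')'(1) v(1) - (a u'')'(0) v(0) - (a u'')(1) v'(1) + (a u'')(0) v'(0)
 + ∫ a u'' v''`. Here `w₁ = (a u'')'` and `w₂ = (a u'')''`. -/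
theorem statement7 (a : ℝ → ℝ)
    (haC : ContinuousOn a (Set.Icc 0 1)) (hapos : ∀ x ∈ Set.Icc (0:ℝ) 1, 0 ≤ a x)
    (u u' u'' w₁ w₂ v v' v'' : ℝ → ℝ)
    -- u ∈ H¹, u' absolutely continuous on [0,1], √a u'' ∈ L², a u'' ∈ H²
    (hu : ACOn 0 1 u u') (hu'' : ACOn 0 1 u' u'')
    (hsau : MeasureTheory.IntegrableOn (fun x => a x * (u'' x) ^ 2) (Set.Ioo 0 1))
    (hau'' : ACOn 0 1 (fun x => a x * u'' x) w₁) (hw₁ : ACOn 0 1 w₁ w₂)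
    (hw₂ : MeasureTheory.IntegrableOn (fun x => (w₂ x) ^ 2) (Set.Ioo 0 1))
    -- v ∈ H¹, v' absolutely continuous on [0,1], √a v'' ∈ L²
    (hv : ACOn 0 1 v v') (hv'' : ACOn 0 1 v' v'')
    (hsav : MeasureTheory.IntegrableOn (fun x => a x * (v'' x) ^ 2) (Set.Ioo 0 1)) :
    ∫ x in Set.Ioo (0:ℝ) 1, w₂ x * v x =
      w₁ 1 * v 1 - w₁ 0 * v 0 - a 1 * u'' 1 * v' 1 + a 0 * u'' 0 * v' 0 +
        ∫ x in Set.Ioo (0:ℝ) 1, a x * u'' x * v'' x :=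
  statement7_general a u'' w₁ w₂ v v' v'' hau'' hw₁ hv hv''
end

section
/- For every u ∈ D_w(A₁) one has ⟨A₁u, u⟩_{X_μ} = ∫₀¹ a (u'')² dx − (γ₀/β₀) a(0) u(0)² − (γ₁/β₁) a(1) u(1)² ≥ 0; i.e. the operator A₁ : D_w(A₁) → X_μ is non negative. -/
open MeasureTheory Set Filter

/-- Membership of `u` (with derivative data `u', u''` and `w₁ = (a u'')'`,
`w₂ = (a u'')''`) in the domain `D_w(A₁)` (weakly degenerate case): `u ∈ H¹(0,1)`,
`u'` absolutely continuous on `[0,1]`, `√a u'' ∈ L²(0,1)`, `a u'' ∈ H²(0,1)` and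
`u''(0) = u''(1) = 0`. -/
def MemD1w (a : ℝ → ℝ) (u u' u'' w₁ w₂ : ℝ → ℝ) : Prop :=
  ACOn 0 1 u u' ∧
  MeasureTheory.IntegrableOn (fun x => (u' x) ^ 2) (Set.Ioo 0 1) ∧
  ACOn 0 1 u' u'' ∧
  MeasureTheory.IntegrableOn (fun x => a x * (u'' x) ^ 2) (Set.Ioo 0 1) ∧
  ACOn 0 1 (fun x => a x * u'' x) w₁ ∧ ACOn 0 1 w₁ w₂ ∧
  MeasureTheory.IntegrableOn (fun x => (w₂ x) ^ 2) (Set.Ioo 0 1) ∧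
  u'' 0 = 0 ∧ u'' 1 = 0

/-- Membership in the domain `D_s(A₁)` (strongly degenerate case): as `MemD1w` but `u'`
is only locally absolutely continuous on `[0,1] \ {x₀}`. -/
def MemD1s (a : ℝ → ℝ) (x₀ : ℝ) (u u' u'' w₁ w₂ : ℝ → ℝ) : Prop :=
  ACOn 0 1 u u' ∧
  MeasureTheory.IntegrableOn (fun x => (u' x) ^ 2) (Set.Ioo 0 1) ∧
  LocACOn x₀ u' u'' ∧
  MeasureTheory.IntegrableOn (fun x => a x * (u'' x) ^ 2) (Set.Ioo 0 1) ∧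
  ACOn 0 1 (fun x => a x * u'' x) w₁ ∧ ACOn 0 1 w₁ w₂ ∧
  MeasureTheory.IntegrableOn (fun x => (w₂ x) ^ 2) (Set.Ioo 0 1) ∧
  u'' 0 = 0 ∧ u'' 1 = 0

/-- The inner product of `X_μ = L²((0,1), dx) ⊕ ℝ_{a(0)/β₀} ⊕ ℝ_{a(1)/β₁}`. -/
noncomputable def innerX (a : ℝ → ℝ) (β₀ β₁ : ℝ) (f g : ℝ → ℝ) : ℝ :=
  (∫ x in Set.Ioo (0:ℝ) 1, f x * g x) + (a 0 / β₀) * (f 0 * g 0) + (a 1 / β₁) * (f 1 * g 1)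

/-- The element `A₁u` of `X_μ`: it equals `(a u'')'' = w₂` on `(0,1)` and its boundary
values are dictated by the generalized Wentzell boundary conditions:
`(A₁u)(j) = (-1)^j (β_j / a(j)) (a u'')'(j) - γ_j u(j)`. -/
noncomputable def A1fun (a : ℝ → ℝ) (β₀ β₁ γ₀ γ₁ : ℝ) (u w₁ w₂ : ℝ → ℝ) : ℝ → ℝ :=
  fun x =>
    if x = 0 then (β₀ / a 0) * w₁ 0 - γ₀ * u 0
    else if x = 1 then -(β₁ / a 1) * w₁ 1 - γ₁ * u 1
    else w₂ x

namespace S12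

lemma intOn {f g : ℝ → ℝ} (h : ACOn 0 1 f g) : IntegrableOn g (Ioo (0:ℝ) 1) :=
  h.1.mono_set Ioo_subset_Icc_self

lemma total {f g : ℝ → ℝ} (h : ACOn 0 1 f g) :
    ∫ x in Ioo (0:ℝ) 1, g x = f 1 - f 0 := by
  have h1 := h.2 1 (by constructor <;> norm_num)
  rw [h1, intervalIntegral.integral_of_le (by norm_num : (0:ℝ) ≤ 1),
    integral_Ioc_eq_integral_Ioo]
  ring

lemma tail {f g : ℝ → ℝ} (h : ACOn 0 1 f g) {t : ℝ} (ht : t ∈ Icc (0:ℝ) 1) :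
    ∫ x in Ioo t 1, g x = f 1 - f t := by
  have h1 := h.2 1 (by constructor <;> norm_num)
  have h2 := h.2 t ht
  have hi1 : IntervalIntegrable g volume 0 1 := by
    rw [intervalIntegrable_iff_integrableOn_Ioc_of_le (by norm_num)]
    exact h.1.mono_set Ioc_subset_Icc_self
  have hi2 : IntervalIntegrable g volume 0 t := by
    rw [intervalIntegrable_iff_integrableOn_Ioc_of_le ht.1]
    exact h.1.mono_set fun x hx => ⟨le_of_lt hx.1, le_trans hx.2 ht.2⟩
  have := intervalIntegral.integral_interval_sub_left hi1 hi2
  rw [intervalIntegral.integral_of_le ht.2, integral_Ioc_eq_integral_Ioo] at this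
  rw [← this, h1, h2]; ring

lemma aesm {f g : ℝ → ℝ} (h : ACOn 0 1 f g) :
    AEStronglyMeasurable f (volume.restrict (Ioo (0:ℝ) 1)) := by
  have hint : IntegrableOn g (uIcc (0:ℝ) 1) := by
    rw [uIcc_of_le (by norm_num : (0:ℝ) ≤ 1)]; exact h.1
  have hcont : ContinuousOn (fun x => f 0 + ∫ t in (0:ℝ)..x, g t) (Icc 0 1) := by
    have := (intervalIntegral.continuousOn_primitive_interval (a := (0:ℝ)) (b := 1) (μ := volume) hint)
    rw [uIcc_of_le (by norm_num : (0:ℝ) ≤ 1)] at this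
    exact continuousOn_const.add this
  have hm : AEStronglyMeasurable (fun x => f 0 + ∫ t in (0:ℝ)..x, g t)
      (volume.restrict (Ioo (0:ℝ) 1)) :=
    (hcont.mono Ioo_subset_Icc_self).aestronglyMeasurable measurableSet_Ioo
  refine hm.congr ?_
  exact ae_restrict_of_forall_mem measurableSet_Ioo
    (fun x hx => (h.2 x (Ioo_subset_Icc_self hx)).symm)

lemma bound {f g : ℝ → ℝ} (h : ACOn 0 1 f g) :
    ∃ C, ∀ x ∈ Icc (0:ℝ) 1, |f x| ≤ C := by
  refine ⟨|f 0| + ∫ t in Icc (0:ℝ) 1, |g t|, fun x hx => ?_⟩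
  rw [h.2 x hx]
  have h1 : |∫ t in (0:ℝ)..x, g t| ≤ ∫ t in Icc (0:ℝ) 1, |g t| := by
    rw [intervalIntegral.integral_of_le hx.1]
    calc |∫ t in Ioc (0:ℝ) x, g t| ≤ ∫ t in Ioc (0:ℝ) x, |g t| := by
          simpa [Real.norm_eq_abs] using
            norm_integral_le_integral_norm (μ := volume.restrict (Ioc (0:ℝ) x)) g
      _ ≤ ∫ t in Icc (0:ℝ) 1, |g t| := by
          refine setIntegral_mono_set h.1.abs
            (ae_of_all _ fun t => abs_nonneg _) (ae_of_all _ ?_)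
          exact fun t htx => ⟨le_of_lt htx.1, le_trans htx.2 hx.2⟩
  calc |f 0 + ∫ t in (0:ℝ)..x, g t| ≤ |f 0| + |∫ t in (0:ℝ)..x, g t| := abs_add_le _ _
    _ ≤ _ := by linarith

lemma mulInt {f g : ℝ → ℝ} (hg : IntegrableOn g (Ioo (0:ℝ) 1))
    (hf : AEStronglyMeasurable f (volume.restrict (Ioo (0:ℝ) 1)))
    {C : ℝ} (hC : ∀ x ∈ Icc (0:ℝ) 1, |f x| ≤ C) :
    IntegrableOn (fun x => f x * g x) (Ioo (0:ℝ) 1) := by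
  refine Integrable.mono' (hg.abs.const_mul C) (hf.mul hg.aestronglyMeasurable) ?_
  refine ae_restrict_of_forall_mem measurableSet_Ioo (fun x hx => ?_)
  rw [Real.norm_eq_abs, abs_mul]
  exact mul_le_mul_of_nonneg_right (hC x (Ioo_subset_Icc_self hx)) (abs_nonneg _)

lemma ibp {f f' g g' : ℝ → ℝ} (hf : ACOn 0 1 f f') (hg : ACOn 0 1 g g')
    (h1 : IntegrableOn (fun x => f' x * g x) (Ioo (0:ℝ) 1))
    (h2 : IntegrableOn (fun x => f x * g' x) (Ioo (0:ℝ) 1)) :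
    ∫ x in Ioo (0:ℝ) 1, f' x * g x
      = f 1 * g 1 - f 0 * g 0 - ∫ x in Ioo (0:ℝ) 1, f x * g' x := by
  set s := Ioo (0:ℝ) 1 with hs
  have hf'i : IntegrableOn f' s := intOn hf
  have hg'i : IntegrableOn g' s := intOn hg
  set T : Set (ℝ × ℝ) := {p | 0 < p.2 ∧ p.2 < p.1} with hT
  have hTm : MeasurableSet T :=
    (measurableSet_lt measurable_const measurable_snd).inter
      (measurableSet_lt measurable_snd measurable_fst)
  set F : ℝ × ℝ → ℝ := fun p => f' p.1 * g' p.2 with hF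
  have hFint : Integrable (T.indicator F)
      ((volume.restrict s).prod (volume.restrict s)) :=
    (hf'i.mul_prod hg'i).indicator hTm
  -- step B: g x - g 0 as an integral over s
  have hgx : ∀ x ∈ s, g x - g 0 = ∫ t in s, (Ioo (0:ℝ) x).indicator g' t := by
    intro x hx
    have := hg.2 x (Ioo_subset_Icc_self hx)
    rw [setIntegral_indicator measurableSet_Ioo,
      inter_eq_right.mpr (fun t htx => Set.mem_Ioo.mpr
        ⟨(Set.mem_Ioo.mp htx).1, lt_trans (Set.mem_Ioo.mp htx).2 hx.2⟩), this,
      intervalIntegral.integral_of_le (le_of_lt hx.1), integral_Ioc_eq_integral_Ioo]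
    ring
  -- key double integral identity
  have key : ∫ x in s, f' x * (g x - g 0) = ∫ t in s, g' t * (f 1 - f t) := by
    have L : ∫ x in s, f' x * (g x - g 0)
        = ∫ x in s, ∫ t in s, T.indicator F (x, t) := by
      refine setIntegral_congr_fun measurableSet_Ioo (fun x hx => ?_)
      rw [hgx x hx, ← integral_const_mul]
      refine integral_congr_ae (ae_of_all _ fun t => ?_)
      simp only [Set.indicator_apply, hT, hF, Set.mem_Ioo, Set.mem_setOf_eq,
        mul_ite, mul_zero]
    have swap : ∫ x in s, ∫ t in s, T.indicator F (x, t)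
        = ∫ t in s, ∫ x in s, T.indicator F (x, t) :=
      integral_integral_swap hFint
    have R : ∫ t in s, ∫ x in s, T.indicator F (x, t)
        = ∫ t in s, g' t * (f 1 - f t) := by
      refine setIntegral_congr_fun measurableSet_Ioo (fun t ht => ?_)
      have inner : ∫ x in s, T.indicator F (x, t)
          = ∫ x in s, (Ioi t).indicator (fun x => f' x * g' t) x := by
        refine integral_congr_ae (ae_of_all _ fun x => ?_)
        have ht0 : (0:ℝ) < t := ht.1
        simp only [Set.indicator_apply, hT, hF, Set.mem_Ioi, Set.mem_setOf_eq, ht0,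
          true_and]
      rw [inner, setIntegral_indicator measurableSet_Ioi]
      have hinter : s ∩ Ioi t = Ioo t 1 := by
        ext x; constructor
        · rintro ⟨⟨_, hx1⟩, hxt⟩; exact ⟨hxt, hx1⟩
        · rintro ⟨hxt, hx1⟩; exact ⟨⟨lt_trans ht.1 hxt, hx1⟩, hxt⟩
      rw [hinter, integral_mul_const, tail hf (Ioo_subset_Icc_self ht), mul_comm]
    rw [L, swap, R]
  -- assemble
  have e1 : ∫ x in s, f' x * g x
      = (∫ x in s, f' x * g 0) + ∫ x in s, f' x * (g x - g 0) := by
    rw [← integral_add (hf'i.mul_const (g 0))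
      ((h1.sub (hf'i.mul_const (g 0))).congr
        (ae_of_all _ fun x => by simp only [Pi.sub_apply]; ring))]
    refine integral_congr_ae (ae_of_all _ fun x => by ring)
  have e2 : ∫ t in s, g' t * (f 1 - f t)
      = (∫ t in s, g' t * f 1) - ∫ t in s, f t * g' t := by
    rw [← integral_sub (hg'i.mul_const (f 1)) h2]
    refine integral_congr_ae (ae_of_all _ fun t => by ring)
  have t1 : ∫ x in s, f' x * g 0 = (f 1 - f 0) * g 0 := by
    rw [integral_mul_const, total hf]
  have t2 : ∫ t in s, g' t * f 1 = (g 1 - g 0) * f 1 := by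
    rw [integral_mul_const, total hg]
  rw [e1, key, e2, t1, t2]; ring

end S12


/-- the operator `A₁` with generalized Wentzell boundary conditions is
non negative on `X_μ`:
`⟨A₁u, u⟩ = ∫ a (u'')² - (γ₀/β₀) a(0) u(0)² - (γ₁/β₁) a(1) u(1)² ≥ 0`. -/
theorem statement12 (β₀ β₁ γ₀ γ₁ : ℝ) (hβ₀ : 0 < β₀) (hβ₁ : 0 < β₁)
    (hγ₀ : γ₀ ≤ 0) (hγ₁ : γ₁ ≤ 0)
    (a : ℝ → ℝ) (x₀ : ℝ) (hx₀ : x₀ ∈ Set.Ioo (0:ℝ) 1) (ha : WeaklyDeg a x₀)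
    (u u' u'' w₁ w₂ : ℝ → ℝ) (hu : MemD1w a u u' u'' w₁ w₂) :
    innerX a β₀ β₁ (A1fun a β₀ β₁ γ₀ γ₁ u w₁ w₂) u =
      (∫ x in Set.Ioo (0:ℝ) 1, a x * (u'' x) ^ 2)
        - (γ₀ / β₀) * (a 0 * (u 0) ^ 2) - (γ₁ / β₁) * (a 1 * (u 1) ^ 2) ∧
    0 ≤ innerX a β₀ β₁ (A1fun a β₀ β₁ γ₀ γ₁ u w₁ w₂) u := by
  obtain ⟨hACu, hu'2, hACu', hau''2, hACau'', hACw₁, hw₂2, hu''0, hu''1⟩ := hu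
  obtain ⟨haC, hx₀I, hax₀, hapos, -⟩ := ha
  have ha0 : 0 < a 0 := hapos 0 ⟨le_rfl, by norm_num⟩ (ne_of_lt hx₀.1)
  have ha1 : 0 < a 1 := hapos 1 ⟨by norm_num, le_rfl⟩ (ne_of_gt hx₀.2)
  -- bounds and measurability
  obtain ⟨Cu, hCu⟩ := S12.bound hACu
  obtain ⟨Cw, hCw⟩ := S12.bound hACw₁
  have hmu := S12.aesm hACu
  have hmw := S12.aesm hACw₁
  -- integrability of the products
  have h1 : IntegrableOn (fun x => w₂ x * u x) (Set.Ioo 0 1) :=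
    (S12.mulInt (S12.intOn hACw₁) hmu hCu).congr
      (ae_of_all _ fun x => mul_comm (u x) (w₂ x))
  have h2 : IntegrableOn (fun x => w₁ x * u' x) (Set.Ioo 0 1) :=
    S12.mulInt (S12.intOn hACu) hmw hCw
  have h3 : IntegrableOn (fun x => (a x * u'' x) * u'' x) (Set.Ioo 0 1) :=
    hau''2.congr (ae_of_all _ fun x => by ring)
  -- the two integrations by parts
  have ibp1 := S12.ibp (f := w₁) (f' := w₂) (g := u) (g' := u') hACw₁ hACu h1 h2
  have ibp2 := S12.ibp (f := fun x => a x * u'' x) (f' := w₁) (g := u') (g' := u'')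
    hACau'' hACu' h2 h3
  have hsq : ∫ x in Set.Ioo (0:ℝ) 1, (a x * u'' x) * u'' x
      = ∫ x in Set.Ioo (0:ℝ) 1, a x * (u'' x) ^ 2 :=
    setIntegral_congr_fun measurableSet_Ioo (fun x _ => by ring)
  have hw₁u' : ∫ x in Set.Ioo (0:ℝ) 1, w₁ x * u' x
      = -∫ x in Set.Ioo (0:ℝ) 1, a x * (u'' x) ^ 2 := by
    rw [ibp2, hsq]; simp [hu''0, hu''1]
  have hIoo : ∫ x in Set.Ioo (0:ℝ) 1, w₂ x * u x
      = w₁ 1 * u 1 - w₁ 0 * u 0 + ∫ x in Set.Ioo (0:ℝ) 1, a x * (u'' x) ^ 2 := by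
    rw [ibp1, hw₁u']; ring
  -- unfold innerX and A1fun
  have hA0 : A1fun a β₀ β₁ γ₀ γ₁ u w₁ w₂ 0 = (β₀ / a 0) * w₁ 0 - γ₀ * u 0 := by
    simp [A1fun]
  have hA1 : A1fun a β₀ β₁ γ₀ γ₁ u w₁ w₂ 1 = -(β₁ / a 1) * w₁ 1 - γ₁ * u 1 := by
    norm_num [A1fun]
  have hAint : ∫ x in Set.Ioo (0:ℝ) 1, A1fun a β₀ β₁ γ₀ γ₁ u w₁ w₂ x * u x
      = ∫ x in Set.Ioo (0:ℝ) 1, w₂ x * u x := by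
    refine setIntegral_congr_fun measurableSet_Ioo (fun x hx => ?_)
    simp [A1fun, hx.1.ne', hx.2.ne]
  have heq : innerX a β₀ β₁ (A1fun a β₀ β₁ γ₀ γ₁ u w₁ w₂) u =
      (∫ x in Set.Ioo (0:ℝ) 1, a x * (u'' x) ^ 2)
        - (γ₀ / β₀) * (a 0 * (u 0) ^ 2) - (γ₁ / β₁) * (a 1 * (u 1) ^ 2) := by
    rw [innerX, hAint, hIoo, hA0, hA1]
    field_simp
    ring
  refine ⟨heq, ?_⟩
  rw [heq]
  have hint : 0 ≤ ∫ x in Set.Ioo (0:ℝ) 1, a x * (u'' x) ^ 2 := by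
    refine setIntegral_nonneg measurableSet_Ioo (fun x hx => ?_)
    refine mul_nonneg ?_ (sq_nonneg _)
    by_cases hxx : x = x₀
    · rw [hxx, hax₀]
    · exact (hapos x (Set.Ioo_subset_Icc_self hx) hxx).le
  have hb0 : (γ₀ / β₀) * (a 0 * (u 0) ^ 2) ≤ 0 :=
    mul_nonpos_iff.mpr (Or.inr ⟨div_nonpos_iff.mpr (Or.inr ⟨hγ₀, hβ₀.le⟩),
      mul_nonneg ha0.le (sq_nonneg _)⟩)
  have hb1 : (γ₁ / β₁) * (a 1 * (u 1) ^ 2) ≤ 0 :=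
    mul_nonpos_iff.mpr (Or.inr ⟨div_nonpos_iff.mpr (Or.inr ⟨hγ₁, hβ₁.le⟩),
      mul_nonneg ha1.le (sq_nonneg _)⟩)
  linarith
end

section
/- For all u, v ∈ D_w(A₂) one has ⟨A₂u, v⟩_{Y_μ} = ∫₀¹ u'' v'' dx − (γ₀/β₀) u(0) v(0) − (γ₁/β₁) u(1) v(1) = ⟨u, A₂v⟩_{Y_μ}; in particular the operator A₂ : D_w(A₂) → Y_μ is symmetric. -/
open MeasureTheory Set Filter

/-- Membership of `u` (with derivatives `u₁ = u'`, `u₂ = u''`, `u₃ = u'''`, `u₄ = u''''`)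
in the domain `D_w(A₂)` (weakly degenerate case): `u ∈ H²(0,1)`, the fourth derivative
`u''''` exists (so `u ∈ W^{4,1}(0,1) ⊂ C³([0,1])`) with `∫ a (u'''')² < ∞`, and
`u''(0) = u''(1) = 0`. -/
def MemD2w (a : ℝ → ℝ) (u u₁ u₂ u₃ u₄ : ℝ → ℝ) : Prop :=
  ACOn 0 1 u u₁ ∧ ACOn 0 1 u₁ u₂ ∧ ACOn 0 1 u₂ u₃ ∧ ACOn 0 1 u₃ u₄ ∧
  MeasureTheory.IntegrableOn (fun x => (u₁ x) ^ 2) (Set.Ioo 0 1) ∧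
  MeasureTheory.IntegrableOn (fun x => (u₂ x) ^ 2) (Set.Ioo 0 1) ∧
  MeasureTheory.IntegrableOn (fun x => a x * (u₄ x) ^ 2) (Set.Ioo 0 1) ∧
  u₂ 0 = 0 ∧ u₂ 1 = 0

/-- The inner product of `Y_μ = L²((0,1), dx/a) ⊕ ℝ_{1/β₀} ⊕ ℝ_{1/β₁}`. -/
noncomputable def innerY (a : ℝ → ℝ) (β₀ β₁ : ℝ) (f g : ℝ → ℝ) : ℝ :=
  (∫ x in Set.Ioo (0:ℝ) 1, f x * g x / a x) + (f 0 * g 0) / β₀ + (f 1 * g 1) / β₁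

/-- The element `A₂u` of `Y_μ`: it equals `a u''''` on `(0,1)` and its boundary values
are dictated by the generalized Wentzell boundary conditions:
`(A₂u)(j) = (-1)^j β_j u'''(j) - γ_j u(j)`. -/
noncomputable def A2fun (a : ℝ → ℝ) (β₀ β₁ γ₀ γ₁ : ℝ) (u u₃ u₄ : ℝ → ℝ) : ℝ → ℝ :=
  fun x =>
    if x = 0 then β₀ * u₃ 0 - γ₀ * u 0
    else if x = 1 then -β₁ * u₃ 1 - γ₁ * u 1
    else a x * u₄ x

/-! ### Auxiliary lemmas -/

lemma ACOn.contOn {f g : ℝ → ℝ} (h : ACOn 0 1 f g) : ContinuousOn f (Set.Icc 0 1) := by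
  have h1 : ContinuousOn (fun x => f 0 + ∫ t in Set.Ioc (0:ℝ) x, g t) (Set.Icc 0 1) :=
    continuousOn_const.add (intervalIntegral.continuousOn_primitive h.1)
  refine h1.congr ?_
  intro x hx
  rw [h.2 x hx, intervalIntegral.integral_of_le hx.1]

lemma ACOn.integral_Ioc {f g : ℝ → ℝ} (h : ACOn 0 1 f g) {x : ℝ} (hx : x ∈ Set.Icc (0:ℝ) 1) :
    (∫ t in Set.Ioc (0:ℝ) x, g t) = f x - f 0 := by
  have h2 := h.2 x hx
  rw [intervalIntegral.integral_of_le hx.1] at h2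
  linarith

/-- Product of an integrable function and a continuous function is integrable on `(0,1)`. -/
lemma int_mul_bdd {h b : ℝ → ℝ} (hh : MeasureTheory.IntegrableOn h (Set.Icc 0 1))
    (hb : ContinuousOn b (Set.Icc 0 1)) :
    MeasureTheory.IntegrableOn (fun x => h x * b x) (Set.Ioo 0 1) := by
  obtain ⟨C, hC⟩ := isCompact_Icc.exists_bound_of_continuousOn hb
  have hmeas : AEStronglyMeasurable b (volume.restrict (Set.Ioo (0:ℝ) 1)) :=
    (hb.mono Set.Ioo_subset_Icc_self).aestronglyMeasurable measurableSet_Ioo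
  have hbd : ∀ᵐ x ∂(volume.restrict (Set.Ioo (0:ℝ) 1)), ‖b x‖ ≤ C := by
    filter_upwards [ae_restrict_mem measurableSet_Ioo] with x hx
    exact hC x (Set.Ioo_subset_Icc_self hx)
  have hmain := Integrable.bdd_mul (hh.mono_set Set.Ioo_subset_Icc_self) hmeas hbd
  exact hmain.congr (Filter.Eventually.of_forall fun x => mul_comm (b x) (h x))

/-- Integration by parts for absolutely continuous functions on `[0,1]`. -/
lemma ibp_sum {f f' g g' : ℝ → ℝ} (hf : ACOn 0 1 f f') (hg : ACOn 0 1 g g')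
    (hfg : MeasureTheory.IntegrableOn (fun x => f' x * g x) (Set.Ioo 0 1))
    (hgf : MeasureTheory.IntegrableOn (fun x => f x * g' x) (Set.Ioo 0 1)) :
    (∫ x in Set.Ioo (0:ℝ) 1, f' x * g x) + (∫ x in Set.Ioo (0:ℝ) 1, f x * g' x)
      = f 1 * g 1 - f 0 * g 0 := by
  set μ := volume.restrict (Set.Ioo (0:ℝ) 1) with hμdef
  have hIoo : MeasurableSet (Set.Ioo (0:ℝ) 1) := measurableSet_Ioo
  have hf' : Integrable f' μ := hf.1.mono_set Set.Ioo_subset_Icc_self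
  have hg' : Integrable g' μ := hg.1.mono_set Set.Ioo_subset_Icc_self
  set M : ℝ × ℝ → ℝ := fun p => f' p.1 * g' p.2 with hMdef
  have hM : Integrable M (μ.prod μ) := hf'.mul_prod hg'
  set s : Set (ℝ × ℝ) := {p | p.2 ≤ p.1} with hsdef
  have hs : MeasurableSet s := measurableSet_le measurable_snd measurable_fst
  have hH1 : Integrable (s.indicator M) (μ.prod μ) := hM.indicator hs
  have hH2 : Integrable (sᶜ.indicator M) (μ.prod μ) := hM.indicator hs.compl
  have hIf : (∫ x in Set.Ioo (0:ℝ) 1, f' x) = f 1 - f 0 := by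
    rw [← MeasureTheory.integral_Ioc_eq_integral_Ioo]
    exact hf.integral_Ioc (Set.mem_Icc.mpr ⟨zero_le_one, le_refl 1⟩)
  have hIg : (∫ x in Set.Ioo (0:ℝ) 1, g' x) = g 1 - g 0 := by
    rw [← MeasureTheory.integral_Ioc_eq_integral_Ioo]
    exact hg.integral_Ioc (Set.mem_Icc.mpr ⟨zero_le_one, le_refl 1⟩)
  -- first piece
  have hA : ∫ p, s.indicator M p ∂(μ.prod μ)
      = ∫ x in Set.Ioo (0:ℝ) 1, f' x * (g x - g 0) := by
    rw [MeasureTheory.integral_prod _ hH1]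
    refine setIntegral_congr_fun hIoo ?_
    intro x hx
    show (∫ t, s.indicator M (x, t) ∂μ) = f' x * (g x - g 0)
    have h1 : (fun t => s.indicator M (x, t))
        = (Set.Iic x).indicator (fun t => f' x * g' t) := by
      ext t
      by_cases h : t ≤ x <;>
        simp [Set.indicator, hsdef, hMdef, h]
    rw [h1, MeasureTheory.setIntegral_indicator measurableSet_Iic]
    have h2 : Set.Ioo (0:ℝ) 1 ∩ Set.Iic x = Set.Ioc 0 x := by
      ext t
      constructor
      · rintro ⟨⟨ht1, _⟩, ht3⟩; exact ⟨ht1, ht3⟩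
      · rintro ⟨ht1, ht2⟩; exact ⟨⟨ht1, lt_of_le_of_lt ht2 hx.2⟩, ht2⟩
    rw [h2, MeasureTheory.integral_const_mul,
      hg.integral_Ioc (Set.mem_Icc_of_Ioo hx)]
  -- second piece
  have hB : ∫ p, sᶜ.indicator M p ∂(μ.prod μ)
      = ∫ y in Set.Ioo (0:ℝ) 1, (f y - f 0) * g' y := by
    rw [MeasureTheory.integral_prod_symm _ hH2]
    refine setIntegral_congr_fun hIoo ?_
    intro y hy
    show (∫ t, sᶜ.indicator M (t, y) ∂μ) = (f y - f 0) * g' y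
    have h1 : (fun t => sᶜ.indicator M (t, y))
        = (Set.Iio y).indicator (fun t => f' t * g' y) := by
      ext t
      by_cases h : t < y
      · simp [Set.indicator, hsdef, hMdef, h, not_le.mpr h]
      · simp [Set.indicator, hsdef, hMdef, h, not_lt.mp h]
    rw [h1, MeasureTheory.setIntegral_indicator measurableSet_Iio]
    have h2 : Set.Ioo (0:ℝ) 1 ∩ Set.Iio y = Set.Ioo 0 y := by
      ext t
      constructor
      · rintro ⟨⟨ht1, _⟩, ht3⟩; exact ⟨ht1, ht3⟩
      · rintro ⟨ht1, ht2⟩; exact ⟨⟨ht1, ht2.trans hy.2⟩, ht2⟩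
    rw [h2, MeasureTheory.integral_mul_const, ← MeasureTheory.integral_Ioc_eq_integral_Ioo,
      hf.integral_Ioc (Set.mem_Icc_of_Ioo hy)]
  -- total
  have hT : (∫ p, s.indicator M p ∂(μ.prod μ)) + (∫ p, sᶜ.indicator M p ∂(μ.prod μ))
      = (f 1 - f 0) * (g 1 - g 0) := by
    rw [← MeasureTheory.integral_add hH1 hH2]
    have h1 : ∫ p, (s.indicator M p + sᶜ.indicator M p) ∂(μ.prod μ)
        = ∫ p, M p ∂(μ.prod μ) := by
      congr 1
      funext p
      exact congrFun (s.indicator_self_add_compl M) p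
    rw [h1]
    have h2 : ∫ p, M p ∂(μ.prod μ) = (∫ x, f' x ∂μ) * (∫ y, g' y ∂μ) :=
      MeasureTheory.integral_prod_mul f' g'
    rw [h2, hμdef]
    rw [hIf, hIg]
  rw [hA, hB] at hT
  -- expand the two integrals
  have hfg0 : Integrable (fun x => f' x * g 0) μ := hf'.mul_const (g 0)
  have hf0g : Integrable (fun x => f 0 * g' x) μ := hg'.const_mul (f 0)
  have hexp1 : ∫ x in Set.Ioo (0:ℝ) 1, f' x * (g x - g 0)
      = (∫ x in Set.Ioo (0:ℝ) 1, f' x * g x) - (f 1 - f 0) * g 0 := by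
    have : (fun x => f' x * (g x - g 0)) = fun x => f' x * g x - f' x * g 0 := by
      funext x; ring
    rw [this, MeasureTheory.integral_sub hfg hfg0, MeasureTheory.integral_mul_const, hIf]
  have hexp2 : ∫ x in Set.Ioo (0:ℝ) 1, (f x - f 0) * g' x
      = (∫ x in Set.Ioo (0:ℝ) 1, f x * g' x) - f 0 * (g 1 - g 0) := by
    have : (fun x => (f x - f 0) * g' x) = fun x => f x * g' x - f 0 * g' x := by
      funext x; ring
    rw [this, MeasureTheory.integral_sub hgf hf0g, MeasureTheory.integral_const_mul, hIg]
  rw [hexp1, hexp2] at hT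
  linarith [hT, sq_nonneg (f 1 - f 0)]

lemma innerY_comm (a : ℝ → ℝ) (β₀ β₁ : ℝ) (f g : ℝ → ℝ) :
    innerY a β₀ β₁ f g = innerY a β₀ β₁ g f := by
  unfold innerY
  have h : (fun x => f x * g x / a x) = fun x => g x * f x / a x := by
    funext x; ring
  rw [h, mul_comm (f 0) (g 0), mul_comm (f 1) (g 1)]

lemma key_formula (β₀ β₁ γ₀ γ₁ : ℝ) (hβ₀ : 0 < β₀) (hβ₁ : 0 < β₁)
    (a : ℝ → ℝ) (x₀ : ℝ) (hx₀ : x₀ ∈ Set.Ioo (0:ℝ) 1) (ha : WeaklyDeg a x₀)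
    (u u₁ u₂ u₃ u₄ v v₁ v₂ v₃ v₄ : ℝ → ℝ)
    (hu : MemD2w a u u₁ u₂ u₃ u₄) (hv : MemD2w a v v₁ v₂ v₃ v₄) :
    innerY a β₀ β₁ (A2fun a β₀ β₁ γ₀ γ₁ u u₃ u₄) v =
      (∫ x in Set.Ioo (0:ℝ) 1, u₂ x * v₂ x)
        - (γ₀ / β₀) * (u 0 * v 0) - (γ₁ / β₁) * (u 1 * v 1) := by
  obtain ⟨huAC, hu1AC, hu2AC, hu3AC, _, _, _, hu20, hu21⟩ := hu
  obtain ⟨hvAC, hv1AC, hv2AC, hv3AC, _, _, _, _, _⟩ := hv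
  have hvC : ContinuousOn v (Set.Icc 0 1) := hvAC.contOn
  have hv1C : ContinuousOn v₁ (Set.Icc 0 1) := hv1AC.contOn
  have hv2C : ContinuousOn v₂ (Set.Icc 0 1) := hv2AC.contOn
  have hu2C : ContinuousOn u₂ (Set.Icc 0 1) := hu2AC.contOn
  have hu3C : ContinuousOn u₃ (Set.Icc 0 1) := hu3AC.contOn
  -- integrabilities
  have hi1 : MeasureTheory.IntegrableOn (fun x => u₄ x * v x) (Set.Ioo 0 1) :=
    int_mul_bdd hu3AC.1 hvC
  have hi2 : MeasureTheory.IntegrableOn (fun x => u₃ x * v₁ x) (Set.Ioo 0 1) :=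
    ((hu3C.mul hv1C).integrableOn_Icc).mono_set Set.Ioo_subset_Icc_self
  have hi3 : MeasureTheory.IntegrableOn (fun x => v₂ x * u₂ x) (Set.Ioo 0 1) :=
    ((hv2C.mul hu2C).integrableOn_Icc).mono_set Set.Ioo_subset_Icc_self
  have hi4 : MeasureTheory.IntegrableOn (fun x => v₁ x * u₃ x) (Set.Ioo 0 1) :=
    ((hv1C.mul hu3C).integrableOn_Icc).mono_set Set.Ioo_subset_Icc_self
  -- integration by parts
  have E1 : (∫ x in Set.Ioo (0:ℝ) 1, u₄ x * v x) + (∫ x in Set.Ioo (0:ℝ) 1, u₃ x * v₁ x)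
      = u₃ 1 * v 1 - u₃ 0 * v 0 := ibp_sum hu3AC hvAC hi1 hi2
  have E2 : (∫ x in Set.Ioo (0:ℝ) 1, v₂ x * u₂ x) + (∫ x in Set.Ioo (0:ℝ) 1, v₁ x * u₃ x)
      = v₁ 1 * u₂ 1 - v₁ 0 * u₂ 0 := ibp_sum hv1AC hu2AC hi3 hi4
  rw [hu20, hu21] at E2
  have hc1 : (fun x => v₂ x * u₂ x) = fun x => u₂ x * v₂ x := by funext x; ring
  have hc2 : (fun x => v₁ x * u₃ x) = fun x => u₃ x * v₁ x := by funext x; ring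
  rw [hc1, hc2] at E2
  -- the weighted integral is the integral of u₄ v
  have hIeq : (∫ x in Set.Ioo (0:ℝ) 1, A2fun a β₀ β₁ γ₀ γ₁ u u₃ u₄ x * v x / a x)
      = ∫ x in Set.Ioo (0:ℝ) 1, u₄ x * v x := by
    refine setIntegral_congr_ae measurableSet_Ioo ?_
    have hne : ∀ᵐ x : ℝ, x ≠ x₀ := by
      have h0 : (volume : Measure ℝ) {x₀} = 0 := measure_singleton x₀
      rw [ae_iff]
      have hset : {x : ℝ | ¬ x ≠ x₀} = {x₀} := by ext t; simp
      rw [hset]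
      exact h0
    filter_upwards [hne] with x hx hxI
    have hx0 : x ≠ 0 := ne_of_gt hxI.1
    have hx1 : x ≠ 1 := ne_of_lt hxI.2
    have hax : a x ≠ 0 := ne_of_gt (ha.2.2.2.1 x (Set.Ioo_subset_Icc_self hxI) hx)
    simp only [A2fun, if_neg hx0, if_neg hx1]
    field_simp
  have hb0 : β₀ ≠ 0 := ne_of_gt hβ₀
  have hb1 : β₁ ≠ 0 := ne_of_gt hβ₁
  have hA0 : A2fun a β₀ β₁ γ₀ γ₁ u u₃ u₄ 0 = β₀ * u₃ 0 - γ₀ * u 0 := by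
    simp [A2fun]
  have hA1 : A2fun a β₀ β₁ γ₀ γ₁ u u₃ u₄ 1 = -β₁ * u₃ 1 - γ₁ * u 1 := by
    simp [A2fun]
  unfold innerY
  rw [hIeq, hA0, hA1]
  have E3 : (∫ x in Set.Ioo (0:ℝ) 1, u₄ x * v x)
      = u₃ 1 * v 1 - u₃ 0 * v 0 + ∫ x in Set.Ioo (0:ℝ) 1, u₂ x * v₂ x := by
    linarith
  rw [E3]
  field_simp
  ring

/-- the operator `A₂` with generalized Wentzell boundary conditions is
symmetric on `Y_μ`:
`⟨A₂u, v⟩ = ∫ u'' v'' - (γ₀/β₀) u(0) v(0) - (γ₁/β₁) u(1) v(1) = ⟨u, A₂v⟩`. -/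
theorem statement16 (β₀ β₁ γ₀ γ₁ : ℝ) (hβ₀ : 0 < β₀) (hβ₁ : 0 < β₁)
    (hγ₀ : γ₀ ≤ 0) (hγ₁ : γ₁ ≤ 0)
    (a : ℝ → ℝ) (x₀ : ℝ) (hx₀ : x₀ ∈ Set.Ioo (0:ℝ) 1) (ha : WeaklyDeg a x₀)
    (u u₁ u₂ u₃ u₄ v v₁ v₂ v₃ v₄ : ℝ → ℝ)
    (hu : MemD2w a u u₁ u₂ u₃ u₄) (hv : MemD2w a v v₁ v₂ v₃ v₄) :
    innerY a β₀ β₁ (A2fun a β₀ β₁ γ₀ γ₁ u u₃ u₄) v =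
      (∫ x in Set.Ioo (0:ℝ) 1, u₂ x * v₂ x)
        - (γ₀ / β₀) * (u 0 * v 0) - (γ₁ / β₁) * (u 1 * v 1) ∧
    innerY a β₀ β₁ (A2fun a β₀ β₁ γ₀ γ₁ u u₃ u₄) v =
      innerY a β₀ β₁ u (A2fun a β₀ β₁ γ₀ γ₁ v v₃ v₄) := by
  constructor
  · exact key_formula β₀ β₁ γ₀ γ₁ hβ₀ hβ₁ a x₀ hx₀ ha u u₁ u₂ u₃ u₄ v v₁ v₂ v₃ v₄ hu hv
  · rw [key_formula β₀ β₁ γ₀ γ₁ hβ₀ hβ₁ a x₀ hx₀ ha u u₁ u₂ u₃ u₄ v v₁ v₂ v₃ v₄ hu hv,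
      innerY_comm,
      key_formula β₀ β₁ γ₀ γ₁ hβ₀ hβ₁ a x₀ hx₀ ha v v₁ v₂ v₃ v₄ u u₁ u₂ u₃ u₄ hv hu]
    have hc : (fun x => v₂ x * u₂ x) = fun x => u₂ x * v₂ x := by funext x; ring
    rw [hc]
    ring
end
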